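/- Let s, t > 0, let u₁, u₂ ∈ ℝ, and let g : ℝ × ℝ → ℝ be bounded and measurable. Then the limit as ε → 0⁺ of ∫₀^s ∫₀^t ∫₀^{min(r₁,r₂)} ∫_ℝ (T_{r₁−τ} ι^ε_{u₁})(u) · (T_{r₂−τ} ι^ε_{u₂})(u) · g(τ,u) du dτ dr₂ dr₁ exists and equals ∫₀^s ∫₀^t ∫₀^{min(r₁,r₂)} ∫_ℝ p_{r₁−τ}(u,u₁) · p_{r₂−τ}(u,u₂) · g(τ,u) du dτ dr₂ dr₁. -/

import Mathlib

/-- The Gaussian heat kernel `p_t(x,y) = (4πt)^{-1/2} exp(-(x-y)²/(4t))`. -/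
noncomputable def hk (t x y : ℝ) : ℝ :=
  (4 * Real.pi * t) ^ (-(1:ℝ)/2) * Real.exp (-(x - y)^2 / (4 * t))

/-- The heat semigroup `(T_t f)(x) = ∫ p_t(x,y) f(y) dy`. -/
noncomputable def heatSg (t : ℝ) (f : ℝ → ℝ) (x : ℝ) : ℝ := ∫ y : ℝ, hk t x y * f y

/-- The triangular approximation `G^K_u` of the Heaviside function centred at `u`. -/
noncomputable def G (K u v : ℝ) : ℝ := if u ≤ v then max 0 (1 - (v - u) / K) else 0

/-- The normalized indicator `ι^ε_u = ε⁻¹ 1_{[u, u+ε]}`. -/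
noncomputable def iot (ε u : ℝ) : ℝ → ℝ := Set.indicator (Set.Icc u (u + ε)) (fun _ => ε⁻¹)

/-- The Gaussian tail function `Φ_t(a) = ∫_a^∞ p_t(0,v) dv`. -/
noncomputable def Phi (t a : ℝ) : ℝ := ∫ v in Set.Ioi a, hk t 0 v

open MeasureTheory Real Filter Set

lemma coef_pos {t : ℝ} (ht : 0 < t) : (0:ℝ) < (4 * Real.pi * t) ^ (-(1:ℝ)/2) :=
  Real.rpow_pos_of_pos (by positivity) _

lemma hk_nonneg (t x y : ℝ) : 0 ≤ hk t x y := by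
  unfold hk
  rcases lt_trichotomy (4 * Real.pi * t) 0 with h | h | h
  · rw [Real.rpow_def_of_neg h]
    have : Real.cos (-(1:ℝ)/2 * Real.pi) = 0 := by
      rw [show (-(1:ℝ)/2 * Real.pi) = -(Real.pi/2) by ring, Real.cos_neg, Real.cos_pi_div_two]
    rw [this]; simp
  · rw [h, Real.zero_rpow (by norm_num)]; simp
  · positivity

lemma hk_symm (t x y : ℝ) : hk t x y = hk t y x := by
  unfold hk; rw [show (x - y)^2 = (y - x)^2 by ring]

lemma hk_le {t : ℝ} (ht : 0 < t) (x y : ℝ) : hk t x y ≤ (4 * Real.pi * t) ^ (-(1:ℝ)/2) := by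
  unfold hk
  nth_rewrite 2 [← mul_one ((4 * Real.pi * t) ^ (-(1:ℝ)/2))]
  apply mul_le_mul_of_nonneg_left _ (le_of_lt (coef_pos ht))
  apply Real.exp_le_one_iff.mpr
  apply div_nonpos_of_nonpos_of_nonneg (by nlinarith [sq_nonneg (x - y)]) (by positivity)

lemma hk_meas : Measurable (fun p : ℝ × ℝ × ℝ => hk p.1 p.2.1 p.2.2) := by
  unfold hk
  exact ((measurable_fst.const_mul _).pow measurable_const).mul
    (((((measurable_fst.comp measurable_snd).sub (measurable_snd.comp measurable_snd)).pow measurable_const).neg.div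
      (measurable_fst.const_mul _)).exp)

lemma hk_cont {t : ℝ} (ht : 0 < t) (x : ℝ) : Continuous (fun y => hk t x y) := by
  unfold hk
  exact continuous_const.mul (Real.continuous_exp.comp
    (((continuous_const.sub continuous_id).pow 2).neg.div_const _))

lemma hk_integrable {t : ℝ} (ht : 0 < t) (x : ℝ) : Integrable (fun y => hk t x y) := by
  unfold hk
  have h1 : Integrable (fun y : ℝ => Real.exp (-(1/(4*t)) * y^2)) :=
    integrable_exp_neg_mul_sq (by positivity)
  have h2 := (h1.comp_sub_left x).const_mul ((4 * Real.pi * t) ^ (-(1:ℝ)/2))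
  apply h2.congr
  filter_upwards with y
  congr 1
  rw [mul_comm (-(1/(4*t)))]
  field_simp

lemma hk_integral {t : ℝ} (ht : 0 < t) (x : ℝ) : ∫ y, hk t x y = 1 := by
  unfold hk
  rw [MeasureTheory.integral_const_mul]
  have h1 : ∫ y : ℝ, Real.exp (-(x - y)^2 / (4 * t)) = ∫ y : ℝ, Real.exp (-(1/(4*t)) * (x - y)^2) := by
    congr 1 with y; congr 1; ring
  have h2 : ∫ y : ℝ, Real.exp (-(1/(4*t)) * (x - y)^2) = ∫ y : ℝ, Real.exp (-(1/(4*t)) * y^2) :=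
    MeasureTheory.integral_sub_left_eq_self (fun y => Real.exp (-(1/(4*t)) * y^2)) volume x
  rw [h1, h2, integral_gaussian]
  have h4 : Real.pi / (1/(4*t)) = 4 * Real.pi * t := by field_simp
  rw [h4, Real.sqrt_eq_rpow, ← Real.rpow_add (by positivity)]
  norm_num

lemma hk_integral' {t : ℝ} (ht : 0 < t) (y : ℝ) : ∫ x, hk t x y = 1 := by
  rw [← hk_integral ht y]; congr 1 with x; exact hk_symm t x y


lemma coef_zero {t : ℝ} (ht : t ≤ 0) : (4 * Real.pi * t) ^ (-(1:ℝ)/2) = 0 := by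
  rcases lt_or_eq_of_le ht with h | h
  · rw [Real.rpow_def_of_neg (by nlinarith [Real.pi_pos])]
    have : Real.cos (-(1:ℝ)/2 * Real.pi) = 0 := by
      rw [show (-(1:ℝ)/2 * Real.pi) = -(Real.pi/2) by ring, Real.cos_neg, Real.cos_pi_div_two]
    rw [this, mul_zero]
  · rw [h, mul_zero, Real.zero_rpow (by norm_num)]

lemma coef_nonneg (t : ℝ) : 0 ≤ (4 * Real.pi * t) ^ (-(1:ℝ)/2) := by
  rcases le_or_gt t 0 with h | h
  · rw [coef_zero h]
  · exact (coef_pos h).le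

lemma hk_le' (t x y : ℝ) : hk t x y ≤ (4 * Real.pi * t) ^ (-(1:ℝ)/2) := by
  rcases le_or_gt t 0 with h | h
  · unfold hk; rw [coef_zero h, zero_mul]
  · exact hk_le h x y

lemma iot_nonneg (ε u y : ℝ) (hε : 0 < ε) : 0 ≤ iot ε u y := by
  unfold iot; apply Set.indicator_nonneg; intro y _; positivity

lemma iot_meas (ε u : ℝ) : Measurable (iot ε u) :=
  (measurable_const.indicator measurableSet_Icc)

lemma iot_integral {ε : ℝ} (hε : 0 < ε) (u : ℝ) : ∫ y, iot ε u y = 1 := by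
  unfold iot
  rw [MeasureTheory.integral_indicator measurableSet_Icc]
  simp [Real.volume_Icc]
  rw [max_eq_left hε.le]
  field_simp

lemma iot_integrable {ε : ℝ} (hε : 0 < ε) (u : ℝ) : Integrable (iot ε u) := by
  unfold iot
  exact (integrable_indicator_iff measurableSet_Icc).mpr
    (by simp [integrableOn_const, Real.volume_Icc])

lemma hk_mul_iot_meas (t ε u : ℝ) (x : ℝ) : Measurable (fun y => hk t x y * iot ε u y) :=
  ((hk_meas.comp (measurable_const.prodMk (measurable_const.prodMk measurable_id))).mul
      (iot_meas ε u))

lemma hk_mul_iot_integrable {t ε : ℝ} (hε : 0 < ε) (x u : ℝ) :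
    Integrable (fun y => hk t x y * iot ε u y) := by
  apply Integrable.mono ((iot_integrable hε u).const_mul ((4 * Real.pi * t) ^ (-(1:ℝ)/2)))
    (hk_mul_iot_meas t ε u x).aestronglyMeasurable
  filter_upwards with y
  rw [Real.norm_eq_abs, Real.norm_eq_abs,
    abs_of_nonneg (mul_nonneg (hk_nonneg _ _ _) (iot_nonneg _ _ _ hε))]
  calc hk t x y * iot ε u y ≤ (4 * Real.pi * t) ^ (-(1:ℝ)/2) * iot ε u y :=
        mul_le_mul_of_nonneg_right (hk_le' t x y) (iot_nonneg _ _ _ hε)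
    _ ≤ |((4 * Real.pi * t) ^ (-(1:ℝ)/2)) * iot ε u y| := le_abs_self _

lemma heatSg_nonneg {ε : ℝ} (hε : 0 < ε) (t u x : ℝ) : 0 ≤ heatSg t (iot ε u) x :=
  integral_nonneg (fun y => mul_nonneg (hk_nonneg _ _ _) (iot_nonneg _ _ _ hε))

lemma heatSg_le {ε : ℝ} (hε : 0 < ε) (t u x : ℝ) :
    heatSg t (iot ε u) x ≤ (4 * Real.pi * t) ^ (-(1:ℝ)/2) := by
  unfold heatSg
  calc ∫ y, hk t x y * iot ε u y ≤ ∫ y, (4 * Real.pi * t) ^ (-(1:ℝ)/2) * iot ε u y := by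
        apply integral_mono (hk_mul_iot_integrable hε x u)
          ((iot_integrable hε u).const_mul _)
        intro y
        exact mul_le_mul_of_nonneg_right (hk_le' t x y) (iot_nonneg _ _ _ hε)
    _ = (4 * Real.pi * t) ^ (-(1:ℝ)/2) := by
        rw [MeasureTheory.integral_const_mul, iot_integral hε, mul_one]

lemma heatSg_iot_eq {t ε : ℝ} (hε : 0 < ε) (u x : ℝ) :
    heatSg t (iot ε u) x = ε⁻¹ * ∫ y in u..(u + ε), hk t x y := by
  unfold heatSg iot
  have h1 : ∀ y, hk t x y * (Set.Icc u (u+ε)).indicator (fun _ => ε⁻¹) y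
      = (Set.Icc u (u+ε)).indicator (fun y => ε⁻¹ * hk t x y) y := by
    intro y
    by_cases hy : y ∈ Set.Icc u (u+ε) <;>
      simp [Set.indicator_of_mem, Set.indicator_of_notMem, hy, mul_comm]
  rw [MeasureTheory.integral_congr_ae (Filter.Eventually.of_forall h1),
    MeasureTheory.integral_indicator measurableSet_Icc,
    MeasureTheory.integral_Icc_eq_integral_Ioc,
    ← intervalIntegral.integral_of_le (by linarith), intervalIntegral.integral_const_mul]

lemma avg_tendsto {f : ℝ → ℝ} (hf : Continuous f) (u : ℝ) :
    Filter.Tendsto (fun ε => ε⁻¹ * ∫ y in u..(u + ε), f y) (nhdsWithin 0 (Set.Ioi 0))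
      (nhds (f u)) := by
  have hd : HasDerivAt (fun v => ∫ y in u..v, f y) (f u) u :=
    intervalIntegral.integral_hasDerivAt_right (hf.intervalIntegrable u u)
      (hf.stronglyMeasurable.stronglyMeasurableAtFilter) hf.continuousAt
  have hslope := hasDerivAt_iff_tendsto_slope.mp hd
  have hmap : Filter.Tendsto (fun ε : ℝ => u + ε) (nhdsWithin 0 (Set.Ioi 0))
      (nhdsWithin u {u}ᶜ) := by
    apply tendsto_nhdsWithin_of_tendsto_nhds_of_eventually_within
    · simpa using ((continuous_const_add u).tendsto (0:ℝ)).mono_left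
        nhdsWithin_le_nhds
    · filter_upwards [self_mem_nhdsWithin] with ε (hε : 0 < ε)
      simp only [Set.mem_compl_iff, Set.mem_singleton_iff]
      intro h
      have : ε = 0 := by linarith [h]
      linarith
  have h2 := hslope.comp hmap
  apply h2.congr'
  filter_upwards [self_mem_nhdsWithin] with ε (hε : 0 < ε)
  simp only [Function.comp_apply, slope_def_field, intervalIntegral.integral_same, sub_zero,
    add_sub_cancel_left]
  rw [div_eq_inv_mul]

lemma heatSg_tendsto {a : ℝ} (ha : 0 < a) (w x : ℝ) :
    Filter.Tendsto (fun ε => heatSg a (iot ε w) x) (nhdsWithin 0 (Set.Ioi 0))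
      (nhds (hk a x w)) := by
  have h := avg_tendsto (hk_cont ha x) w
  apply h.congr'
  filter_upwards [self_mem_nhdsWithin] with ε (hε : 0 < ε)
  rw [heatSg_iot_eq hε]

/-- dominating function for the second heat factor -/
noncomputable def Db (b w x : ℝ) : ℝ :=
  (4 * Real.pi * b) ^ (-(1:ℝ)/2) * Real.exp (1/(4*b)) * Real.exp (-(x - w)^2 / (8 * b))

lemma Db_nonneg {b : ℝ} (hb : 0 < b) (w x : ℝ) : 0 ≤ Db b w x := by
  unfold Db; positivity

lemma Db_integrable {b : ℝ} (hb : 0 < b) (w : ℝ) : Integrable (fun x => Db b w x) := by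
  unfold Db
  have h1 : Integrable (fun x : ℝ => Real.exp (-(1/(8*b)) * x^2)) :=
    integrable_exp_neg_mul_sq (by positivity)
  have h2 := ((h1.comp_sub_right w).const_mul
    ((4 * Real.pi * b) ^ (-(1:ℝ)/2) * Real.exp (1/(4*b))))
  apply h2.congr
  filter_upwards with x
  congr 1
  ring

lemma hk_le_Db {b : ℝ} (hb : 0 < b) {w x y : ℝ} (hy : y ∈ Set.Icc w (w + 1)) :
    hk b x y ≤ Db b w x := by
  unfold hk Db
  rw [mul_assoc ((4 * Real.pi * b) ^ (-(1:ℝ)/2)) (Real.exp (1/(4*b))), ← Real.exp_add]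
  apply mul_le_mul_of_nonneg_left _ (coef_nonneg b)
  apply Real.exp_le_exp.mpr
  rw [div_add_div _ _ (by positivity : (4*b:ℝ) ≠ 0) (by positivity : (8*b:ℝ) ≠ 0)]
  rw [div_le_div_iff₀ (by positivity) (by positivity)]
  obtain ⟨hy1, hy2⟩ := hy
  have h1 : (y - w)^2 ≤ 1 := by nlinarith
  nlinarith [sq_nonneg (x - y - (y - w)), mul_pos hb hb, h1, sq_nonneg (y - w),
    mul_pos (mul_pos hb hb) hb]

lemma hk_le_Db' {b : ℝ} (hb : 0 < b) (w x : ℝ) : hk b x w ≤ Db b w x :=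
  hk_le_Db hb (by constructor <;> linarith)

lemma heatSg_le_Db {b ε : ℝ} (hb : 0 < b) (hε : 0 < ε) (hε1 : ε ≤ 1) (w x : ℝ) :
    heatSg b (iot ε w) x ≤ Db b w x := by
  unfold heatSg
  calc ∫ y, hk b x y * iot ε w y ≤ ∫ y, Db b w x * iot ε w y := by
        apply integral_mono (hk_mul_iot_integrable hε x w) ((iot_integrable hε w).const_mul _)
        intro y
        dsimp only
        rcases eq_or_ne (iot ε w y) 0 with h | h
        · rw [h, mul_zero, mul_zero]
        · have hy : y ∈ Set.Icc w (w + ε) := by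
            by_contra hc
            exact h (Set.indicator_of_notMem hc _)
          apply mul_le_mul_of_nonneg_right _ (iot_nonneg _ _ _ hε)
          exact hk_le_Db hb ⟨hy.1, by linarith [hy.2]⟩
    _ = Db b w x := by rw [MeasureTheory.integral_const_mul, iot_integral hε, mul_one]

lemma heatSg_meas {f : ℝ → ℝ} (hf : Measurable f) :
    Measurable (fun p : ℝ × ℝ => heatSg p.1 f p.2) := by
  unfold heatSg
  have h : StronglyMeasurable (fun q : (ℝ × ℝ) × ℝ => hk q.1.1 q.1.2 q.2 * f q.2) := by
    apply Measurable.stronglyMeasurable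
    exact (hk_meas.comp ((measurable_fst.comp measurable_fst).prodMk
      ((measurable_snd.comp measurable_fst).prodMk measurable_snd))).mul (hf.comp measurable_snd)
  exact (h.integral_prod_right').measurable

lemma heatSg_mass {b ε : ℝ} (hb : 0 < b) (hε : 0 < ε) (hε1 : ε ≤ 1) (w : ℝ) :
    ∫ x, heatSg b (iot ε w) x = 1 := by
  unfold heatSg
  have hint : Integrable (Function.uncurry fun x y => hk b x y * iot ε w y)
      (volume.prod volume) := by
    apply Integrable.mono ((Db_integrable hb w).mul_prod (iot_integrable hε w))
    · apply Measurable.aestronglyMeasurable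
      exact (hk_meas.comp (measurable_const.prodMk
        (measurable_fst.prodMk measurable_snd))).mul ((iot_meas ε w).comp measurable_snd)
    · filter_upwards with z
      rw [Function.uncurry]
      rw [Real.norm_eq_abs, Real.norm_eq_abs,
        abs_of_nonneg (mul_nonneg (hk_nonneg _ _ _) (iot_nonneg _ _ _ hε))]
      rcases eq_or_ne (iot ε w z.2) 0 with h | h
      · rw [h, mul_zero]
        exact abs_nonneg _
      · have hy : z.2 ∈ Set.Icc w (w + ε) := by
          by_contra hc
          exact h (Set.indicator_of_notMem hc _)
        calc hk b z.1 z.2 * iot ε w z.2 ≤ Db b w z.1 * iot ε w z.2 :=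
              mul_le_mul_of_nonneg_right (hk_le_Db hb ⟨hy.1, by linarith [hy.2]⟩)
                (iot_nonneg _ _ _ hε)
          _ ≤ |Db b w z.1 * iot ε w z.2| := le_abs_self _
  rw [MeasureTheory.integral_integral_swap hint]
  have h1 : ∀ y, ∫ x, hk b x y * iot ε w y = iot ε w y := by
    intro y
    rw [MeasureTheory.integral_mul_const, hk_integral' hb, one_mul]
  rw [MeasureTheory.integral_congr_ae (Filter.Eventually.of_forall h1), iot_integral hε]

lemma heatSg_meas_x {f : ℝ → ℝ} (hf : Measurable f) (a : ℝ) :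
    Measurable (fun u => heatSg a f u) :=
  (heatSg_meas hf).comp (measurable_const.prodMk measurable_id)

lemma M_nonneg {g : ℝ × ℝ → ℝ} {M : ℝ} (hgb : ∀ z, |g z| ≤ M) : 0 ≤ M :=
  le_trans (abs_nonneg _) (hgb (0, 0))

lemma levelU {a b : ℝ} (ha : 0 < a) (hb : 0 < b) (u₁ u₂ : ℝ) (g : ℝ × ℝ → ℝ)
    (hgm : Measurable g) (M : ℝ) (hgb : ∀ z, |g z| ≤ M) (τ : ℝ) :
    Filter.Tendsto (fun ε => ∫ u : ℝ,
        heatSg (a) (iot ε u₁) u * heatSg (b) (iot ε u₂) u * g (τ, u))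
      (nhdsWithin 0 (Set.Ioi 0))
      (nhds (∫ u : ℝ, hk a u u₁ * hk b u u₂ * g (τ, u))) := by
  apply MeasureTheory.tendsto_integral_filter_of_dominated_convergence
    (fun u => (4 * Real.pi * a) ^ (-(1:ℝ)/2) * Db b u₂ u * M)
  · filter_upwards [self_mem_nhdsWithin] with ε (hε : 0 < ε)
    apply Measurable.aestronglyMeasurable
    exact ((heatSg_meas_x (iot_meas ε u₁) a).mul (heatSg_meas_x (iot_meas ε u₂) b)).mul
      (hgm.comp (measurable_const.prodMk measurable_id))
  · filter_upwards [Ioc_mem_nhdsGT_of_mem (by norm_num : (0:ℝ) ∈ Set.Ico 0 1)]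
      with ε hε
    obtain ⟨hε, hε1⟩ := hε
    filter_upwards with u
    rw [Real.norm_eq_abs, abs_mul, abs_mul,
      abs_of_nonneg (heatSg_nonneg hε a u₁ u), abs_of_nonneg (heatSg_nonneg hε b u₂ u)]
    apply mul_le_mul
    · apply mul_le_mul (heatSg_le hε a u₁ u) (heatSg_le_Db hb hε hε1 u₂ u)
        (heatSg_nonneg hε b u₂ u) (coef_nonneg a)
    · exact hgb _
    · exact abs_nonneg _
    · exact mul_nonneg (coef_nonneg a) (Db_nonneg hb u₂ u)
  · exact ((Db_integrable hb u₂).const_mul _).mul_const _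
  · filter_upwards with u
    exact ((heatSg_tendsto ha u₁ u).mul (heatSg_tendsto hb u₂ u)).mul tendsto_const_nhds

lemma rpow_tail_integrableOn {r₁ m : ℝ} (hm : 0 ≤ m) (hmr : m ≤ r₁) :
    MeasureTheory.IntegrableOn (fun τ => (r₁ - τ) ^ (-(1:ℝ)/2)) (Set.Ioc 0 m) := by
  have h : IntervalIntegrable (fun x : ℝ => x ^ (-(1:ℝ)/2)) volume (r₁ - 0) (r₁ - m) :=
    intervalIntegral.intervalIntegrable_rpow' (by norm_num)
  have h2 := h.comp_sub_left r₁
  simp only [sub_sub_cancel] at h2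
  exact h2.1

lemma rpow_tail_integral_le {r₁ m : ℝ} (hr₁ : 0 < r₁) (hm : 0 ≤ m) (hmr : m ≤ r₁) :
    ∫ τ in Set.Ioc 0 m, (r₁ - τ) ^ (-(1:ℝ)/2) ≤ 2 * Real.sqrt r₁ := by
  rw [← intervalIntegral.integral_of_le hm]
  rw [show (fun τ => (r₁ - τ) ^ (-(1:ℝ)/2)) = (fun τ => (fun x : ℝ => x ^ (-(1:ℝ)/2)) (r₁ - τ))
    from rfl]
  rw [intervalIntegral.integral_comp_sub_left (fun x : ℝ => x ^ (-(1:ℝ)/2)) r₁]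
  rw [integral_rpow (Or.inl (by norm_num))]
  have h1 : (-(1:ℝ)/2 + 1) = 1/2 := by norm_num
  rw [h1]
  have h2 : (0:ℝ) ≤ (r₁ - m) ^ ((1:ℝ)/2) := Real.rpow_nonneg (by linarith) _
  have h3 : r₁ ^ ((1:ℝ)/2) = Real.sqrt r₁ := (Real.sqrt_eq_rpow r₁).symm
  rw [sub_zero]
  rw [div_le_iff₀ (by norm_num : (0:ℝ) < 1/2)] at *
  nlinarith [Real.sqrt_nonneg r₁]

lemma heatSg_integrable_x {b ε : ℝ} (hb : 0 < b) (hε : 0 < ε) (hε1 : ε ≤ 1) (w : ℝ) :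
    Integrable (fun x => heatSg b (iot ε w) x) := by
  apply Integrable.mono (Db_integrable hb w) (heatSg_meas_x (iot_meas ε w) b).aestronglyMeasurable
  filter_upwards with x
  rw [Real.norm_eq_abs, Real.norm_eq_abs, abs_of_nonneg (heatSg_nonneg hε b w x)]
  exact (heatSg_le_Db hb hε hε1 w x).trans (le_abs_self _)

lemma inner_bound {a b ε M : ℝ} (hb : 0 < b) (hε : 0 < ε) (hε1 : ε ≤ 1)
    {g : ℝ × ℝ → ℝ} (hgb : ∀ z, |g z| ≤ M) (u₁ u₂ τ : ℝ) :
    |∫ u : ℝ, heatSg a (iot ε u₁) u * heatSg b (iot ε u₂) u * g (τ, u)|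
      ≤ M * (4 * Real.pi * a) ^ (-(1:ℝ)/2) := by
  have key : ‖∫ u : ℝ, heatSg a (iot ε u₁) u * heatSg b (iot ε u₂) u * g (τ, u)‖
      ≤ ∫ u : ℝ, (4 * Real.pi * a) ^ (-(1:ℝ)/2) * heatSg b (iot ε u₂) u * M := by
    apply MeasureTheory.norm_integral_le_of_norm_le
    · exact (((heatSg_integrable_x hb hε hε1 u₂).const_mul _).mul_const _)
    · filter_upwards with u
      rw [Real.norm_eq_abs, abs_mul, abs_mul,
        abs_of_nonneg (heatSg_nonneg hε a u₁ u), abs_of_nonneg (heatSg_nonneg hε b u₂ u)]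
      apply mul_le_mul _ (hgb _) (abs_nonneg _)
        (mul_nonneg (coef_nonneg a) (heatSg_nonneg hε b u₂ u))
      exact mul_le_mul_of_nonneg_right (heatSg_le hε a u₁ u) (heatSg_nonneg hε b u₂ u)
  rw [Real.norm_eq_abs] at key
  apply key.trans
  have : ∫ u : ℝ, (4 * Real.pi * a) ^ (-(1:ℝ)/2) * heatSg b (iot ε u₂) u * M
      = (4 * Real.pi * a) ^ (-(1:ℝ)/2) * M := by
    rw [show (fun u : ℝ => (4 * Real.pi * a) ^ (-(1:ℝ)/2) * heatSg b (iot ε u₂) u * M)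
        = (fun u : ℝ => ((4 * Real.pi * a) ^ (-(1:ℝ)/2) * M) * heatSg b (iot ε u₂) u) by
      funext u; ring]
    rw [MeasureTheory.integral_const_mul, heatSg_mass hb hε hε1, mul_one]
  rw [this, mul_comm]

lemma ae_ne_restrict (s : Set ℝ) (m : ℝ) : ∀ᵐ τ ∂(volume.restrict s), τ ≠ m := by
  rw [MeasureTheory.ae_iff]
  apply MeasureTheory.measure_mono_null (t := {m})
  · intro τ hτ
    simpa using hτ
  · rw [MeasureTheory.Measure.restrict_apply (measurableSet_singleton m)]
    exact MeasureTheory.measure_mono_null Set.inter_subset_left (MeasureTheory.measure_singleton m)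

lemma inner_meas3 (ε u₁ u₂ : ℝ) {g : ℝ × ℝ → ℝ} (hgm : Measurable g) :
    Measurable (fun q : (ℝ × ℝ) × ℝ => ∫ u : ℝ,
      heatSg (q.1.1 - q.2) (iot ε u₁) u * heatSg (q.1.2 - q.2) (iot ε u₂) u * g (q.2, u)) := by
  have h : StronglyMeasurable (fun z : ((ℝ × ℝ) × ℝ) × ℝ =>
      heatSg (z.1.1.1 - z.1.2) (iot ε u₁) z.2 * heatSg (z.1.1.2 - z.1.2) (iot ε u₂) z.2
        * g (z.1.2, z.2)) := by
    apply Measurable.stronglyMeasurable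
    have m11 : Measurable (fun z : ((ℝ × ℝ) × ℝ) × ℝ => z.1.1.1) :=
      measurable_fst.comp (measurable_fst.comp measurable_fst)
    have m12 : Measurable (fun z : ((ℝ × ℝ) × ℝ) × ℝ => z.1.1.2) :=
      measurable_snd.comp (measurable_fst.comp measurable_fst)
    have mt : Measurable (fun z : ((ℝ × ℝ) × ℝ) × ℝ => z.1.2) :=
      measurable_snd.comp measurable_fst
    exact (((heatSg_meas (iot_meas ε u₁)).comp ((m11.sub mt).prodMk measurable_snd)).mul
      ((heatSg_meas (iot_meas ε u₂)).comp ((m12.sub mt).prodMk measurable_snd))).mul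
      (hgm.comp (mt.prodMk measurable_snd))
  exact h.integral_prod_right'.measurable

lemma innerL_meas3 (u₁ u₂ : ℝ) {g : ℝ × ℝ → ℝ} (hgm : Measurable g) :
    Measurable (fun q : (ℝ × ℝ) × ℝ => ∫ u : ℝ,
      hk (q.1.1 - q.2) u u₁ * hk (q.1.2 - q.2) u u₂ * g (q.2, u)) := by
  have h : StronglyMeasurable (fun z : ((ℝ × ℝ) × ℝ) × ℝ =>
      hk (z.1.1.1 - z.1.2) z.2 u₁ * hk (z.1.1.2 - z.1.2) z.2 u₂ * g (z.1.2, z.2)) := by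
    apply Measurable.stronglyMeasurable
    have m11 : Measurable (fun z : ((ℝ × ℝ) × ℝ) × ℝ => z.1.1.1) :=
      measurable_fst.comp (measurable_fst.comp measurable_fst)
    have m12 : Measurable (fun z : ((ℝ × ℝ) × ℝ) × ℝ => z.1.1.2) :=
      measurable_snd.comp (measurable_fst.comp measurable_fst)
    have mt : Measurable (fun z : ((ℝ × ℝ) × ℝ) × ℝ => z.1.2) :=
      measurable_snd.comp measurable_fst
    exact ((hk_meas.comp ((m11.sub mt).prodMk (measurable_snd.prodMk measurable_const))).mul
      (hk_meas.comp ((m12.sub mt).prodMk (measurable_snd.prodMk measurable_const)))).mul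
      (hgm.comp (mt.prodMk measurable_snd))
  exact h.integral_prod_right'.measurable


lemma inner_meas_tau (ε u₁ u₂ r₁ r₂ : ℝ) {g : ℝ × ℝ → ℝ} (hgm : Measurable g) :
    Measurable (fun τ : ℝ => ∫ u : ℝ,
      heatSg (r₁ - τ) (iot ε u₁) u * heatSg (r₂ - τ) (iot ε u₂) u * g (τ, u)) := by
  have h : StronglyMeasurable (fun z : ℝ × ℝ =>
      heatSg (r₁ - z.1) (iot ε u₁) z.2 * heatSg (r₂ - z.1) (iot ε u₂) z.2 * g (z.1, z.2)) := by
    apply Measurable.stronglyMeasurable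
    exact (((heatSg_meas (iot_meas ε u₁)).comp
        (((measurable_const.sub measurable_fst)).prodMk measurable_snd)).mul
      ((heatSg_meas (iot_meas ε u₂)).comp
        (((measurable_const.sub measurable_fst)).prodMk measurable_snd))).mul
      (hgm.comp (measurable_fst.prodMk measurable_snd))
  exact h.integral_prod_right'.measurable

lemma innerL_meas_tau (u₁ u₂ r₁ r₂ : ℝ) {g : ℝ × ℝ → ℝ} (hgm : Measurable g) :
    Measurable (fun τ : ℝ => ∫ u : ℝ,
      hk (r₁ - τ) u u₁ * hk (r₂ - τ) u u₂ * g (τ, u)) := by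
  have h : StronglyMeasurable (fun z : ℝ × ℝ =>
      hk (r₁ - z.1) z.2 u₁ * hk (r₂ - z.1) z.2 u₂ * g (z.1, z.2)) := by
    apply Measurable.stronglyMeasurable
    exact ((hk_meas.comp ((measurable_const.sub measurable_fst).prodMk
        (measurable_snd.prodMk measurable_const))).mul
      (hk_meas.comp ((measurable_const.sub measurable_fst).prodMk
        (measurable_snd.prodMk measurable_const)))).mul
      (hgm.comp (measurable_fst.prodMk measurable_snd))
  exact h.integral_prod_right'.measurable

set_option maxHeartbeats 1000000 in
lemma levelTau {r₁ r₂ : ℝ} (hr₁ : 0 < r₁) (hr₂ : 0 < r₂) (u₁ u₂ : ℝ) {g : ℝ × ℝ → ℝ}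
    (hgm : Measurable g) (M : ℝ) (hgb : ∀ z, |g z| ≤ M) :
    Filter.Tendsto (fun ε => ∫ τ in Set.Ioc 0 (min r₁ r₂), ∫ u : ℝ,
        heatSg (r₁ - τ) (iot ε u₁) u * heatSg (r₂ - τ) (iot ε u₂) u * g (τ, u))
      (nhdsWithin 0 (Set.Ioi 0))
      (nhds (∫ τ in Set.Ioc 0 (min r₁ r₂), ∫ u : ℝ,
        hk (r₁ - τ) u u₁ * hk (r₂ - τ) u u₂ * g (τ, u))) := by
  set m := min r₁ r₂ with hm_def
  have hm : 0 < m := lt_min hr₁ hr₂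
  have hmr₁ : m ≤ r₁ := min_le_left _ _
  have hmr₂ : m ≤ r₂ := min_le_right _ _
  apply MeasureTheory.tendsto_integral_filter_of_dominated_convergence
    (fun τ => M * ((4 * Real.pi) ^ (-(1:ℝ)/2) * (r₁ - τ) ^ (-(1:ℝ)/2)))
  · filter_upwards [self_mem_nhdsWithin] with ε (hε : 0 < ε)
    exact (inner_meas_tau ε u₁ u₂ r₁ r₂ hgm).aestronglyMeasurable
  · filter_upwards [Ioc_mem_nhdsGT_of_mem (by norm_num : (0:ℝ) ∈ Set.Ico 0 1)] with ε hε
    obtain ⟨hε, hε1⟩ := hε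
    filter_upwards [MeasureTheory.ae_restrict_mem measurableSet_Ioc, ae_ne_restrict _ m]
      with τ hτ hτne
    have hτm : τ < m := lt_of_le_of_ne hτ.2 hτne
    have hb : 0 < r₂ - τ := by linarith [hτm.trans_le hmr₂]
    have key := inner_bound (a := r₁ - τ) hb hε hε1 hgb u₁ u₂ τ
    rw [Real.norm_eq_abs]
    apply key.trans
    apply mul_le_mul_of_nonneg_left _ (M_nonneg hgb)
    rw [show (4 * Real.pi * (r₁ - τ)) = (4 * Real.pi) * (r₁ - τ) by ring,
      Real.mul_rpow (by positivity) (by linarith [hτm.trans_le hmr₁] : (0:ℝ) ≤ r₁ - τ)]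
  · exact (((rpow_tail_integrableOn hm.le hmr₁).const_mul _).const_mul M)
  · filter_upwards [MeasureTheory.ae_restrict_mem measurableSet_Ioc, ae_ne_restrict _ m]
      with τ hτ hτne
    have hτm : τ < m := lt_of_le_of_ne hτ.2 hτne
    have ha : 0 < r₁ - τ := by linarith [hτm.trans_le hmr₁]
    have hb : 0 < r₂ - τ := by linarith [hτm.trans_le hmr₂]
    exact levelU ha hb u₁ u₂ g hgm M hgb τ

lemma tau_integral_bound {r₁ r₂ ε M : ℝ} (hr₁ : 0 < r₁) (hr₂ : 0 < r₂) (hε : 0 < ε)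
    (hε1 : ε ≤ 1) {g : ℝ × ℝ → ℝ} (hgb : ∀ z, |g z| ≤ M) (u₁ u₂ : ℝ) :
    |∫ τ in Set.Ioc 0 (min r₁ r₂), ∫ u : ℝ,
        heatSg (r₁ - τ) (iot ε u₁) u * heatSg (r₂ - τ) (iot ε u₂) u * g (τ, u)|
      ≤ M * ((4 * Real.pi) ^ (-(1:ℝ)/2) * (2 * Real.sqrt r₁)) := by
  set m := min r₁ r₂ with hm_def
  have hm : 0 < m := lt_min hr₁ hr₂
  have hmr₁ : m ≤ r₁ := min_le_left _ _
  have hmr₂ : m ≤ r₂ := min_le_right _ _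
  have key : ‖∫ τ in Set.Ioc 0 m, ∫ u : ℝ,
      heatSg (r₁ - τ) (iot ε u₁) u * heatSg (r₂ - τ) (iot ε u₂) u * g (τ, u)‖
      ≤ ∫ τ in Set.Ioc 0 m, M * ((4 * Real.pi) ^ (-(1:ℝ)/2) * (r₁ - τ) ^ (-(1:ℝ)/2)) := by
    apply MeasureTheory.norm_integral_le_of_norm_le
    · exact (((rpow_tail_integrableOn hm.le hmr₁).const_mul _).const_mul M)
    · filter_upwards [MeasureTheory.ae_restrict_mem measurableSet_Ioc, ae_ne_restrict _ m]
        with τ hτ hτne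
      have hτm : τ < m := lt_of_le_of_ne hτ.2 hτne
      have hb : 0 < r₂ - τ := by linarith [hτm.trans_le hmr₂]
      have key2 := inner_bound (a := r₁ - τ) hb hε hε1 hgb u₁ u₂ τ
      rw [Real.norm_eq_abs]
      apply key2.trans
      apply mul_le_mul_of_nonneg_left _ (M_nonneg hgb)
      rw [show (4 * Real.pi * (r₁ - τ)) = (4 * Real.pi) * (r₁ - τ) by ring,
        Real.mul_rpow (by positivity) (by linarith [hτm.trans_le hmr₁] : (0:ℝ) ≤ r₁ - τ)]
  rw [Real.norm_eq_abs] at key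
  apply key.trans
  have h2 : ∫ τ in Set.Ioc 0 m, M * ((4 * Real.pi) ^ (-(1:ℝ)/2) * (r₁ - τ) ^ (-(1:ℝ)/2))
      = (M * (4 * Real.pi) ^ (-(1:ℝ)/2)) * ∫ τ in Set.Ioc 0 m, (r₁ - τ) ^ (-(1:ℝ)/2) := by
    rw [← MeasureTheory.integral_const_mul]
    congr 1 with τ
    ring
  rw [h2]
  have h3 := rpow_tail_integral_le hr₁ hm.le hmr₁
  have h4 : 0 ≤ M * (4 * Real.pi) ^ (-(1:ℝ)/2) :=
    mul_nonneg (M_nonneg hgb) (by positivity)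
  calc (M * (4 * Real.pi) ^ (-(1:ℝ)/2)) * ∫ τ in Set.Ioc 0 m, (r₁ - τ) ^ (-(1:ℝ)/2)
      ≤ (M * (4 * Real.pi) ^ (-(1:ℝ)/2)) * (2 * Real.sqrt r₁) :=
        mul_le_mul_of_nonneg_left h3 h4
    _ = M * ((4 * Real.pi) ^ (-(1:ℝ)/2) * (2 * Real.sqrt r₁)) := by ring

lemma inner_meas_2 (ε u₁ u₂ r₁ : ℝ) {g : ℝ × ℝ → ℝ} (hgm : Measurable g) :
    Measurable (fun p : ℝ × ℝ => ∫ u : ℝ,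
      heatSg (r₁ - p.2) (iot ε u₁) u * heatSg (p.1 - p.2) (iot ε u₂) u * g (p.2, u)) := by
  have h : StronglyMeasurable (fun z : (ℝ × ℝ) × ℝ =>
      heatSg (r₁ - z.1.2) (iot ε u₁) z.2 * heatSg (z.1.1 - z.1.2) (iot ε u₂) z.2
        * g (z.1.2, z.2)) := by
    apply Measurable.stronglyMeasurable
    have m1 : Measurable (fun z : (ℝ × ℝ) × ℝ => z.1.1) := measurable_fst.comp measurable_fst
    have mt : Measurable (fun z : (ℝ × ℝ) × ℝ => z.1.2) := measurable_snd.comp measurable_fst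
    exact (((heatSg_meas (iot_meas ε u₁)).comp
        ((measurable_const.sub mt).prodMk measurable_snd)).mul
      ((heatSg_meas (iot_meas ε u₂)).comp ((m1.sub mt).prodMk measurable_snd))).mul
      (hgm.comp (mt.prodMk measurable_snd))
  exact h.integral_prod_right'.measurable

lemma phi1_meas (ε u₁ u₂ r₁ : ℝ) {g : ℝ × ℝ → ℝ} (hgm : Measurable g) :
    Measurable (fun r₂ : ℝ => ∫ τ in Set.Ioc 0 (min r₁ r₂), ∫ u : ℝ,
      heatSg (r₁ - τ) (iot ε u₁) u * heatSg (r₂ - τ) (iot ε u₂) u * g (τ, u)) := by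
  have hS : MeasurableSet {p : ℝ × ℝ | p.2 ∈ Set.Ioc 0 (min r₁ p.1)} := by
    have he : {p : ℝ × ℝ | p.2 ∈ Set.Ioc 0 (min r₁ p.1)}
        = {p : ℝ × ℝ | 0 < p.2} ∩ {p : ℝ × ℝ | p.2 ≤ min r₁ p.1} := by
      ext p; simp [Set.mem_Ioc]
    rw [he]
    exact (measurableSet_lt measurable_const measurable_snd).inter
      (measurableSet_le measurable_snd (measurable_const.min measurable_fst))
  have hF := inner_meas_2 ε u₁ u₂ r₁ hgm
  have key : (fun r₂ : ℝ => ∫ τ in Set.Ioc 0 (min r₁ r₂), ∫ u : ℝ,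
      heatSg (r₁ - τ) (iot ε u₁) u * heatSg (r₂ - τ) (iot ε u₂) u * g (τ, u))
      = fun r₂ : ℝ => ∫ τ : ℝ, ({p : ℝ × ℝ | p.2 ∈ Set.Ioc 0 (min r₁ p.1)}).indicator
          (fun p : ℝ × ℝ => ∫ u : ℝ,
            heatSg (r₁ - p.2) (iot ε u₁) u * heatSg (p.1 - p.2) (iot ε u₂) u * g (p.2, u))
          (r₂, τ) := by
    funext r₂
    rw [← MeasureTheory.integral_indicator measurableSet_Ioc]
    congr 1 with τ
  rw [key]
  exact ((hF.indicator hS).stronglyMeasurable.integral_prod_right').measurable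

lemma levelR2 {r₁ t : ℝ} (hr₁ : 0 < r₁) (ht : 0 < t) (u₁ u₂ : ℝ) {g : ℝ × ℝ → ℝ}
    (hgm : Measurable g) (M : ℝ) (hgb : ∀ z, |g z| ≤ M) :
    Filter.Tendsto (fun ε => ∫ r₂ in Set.Ioc 0 t, ∫ τ in (0:ℝ)..(min r₁ r₂), ∫ u : ℝ,
        heatSg (r₁ - τ) (iot ε u₁) u * heatSg (r₂ - τ) (iot ε u₂) u * g (τ, u))
      (nhdsWithin 0 (Set.Ioi 0))
      (nhds (∫ r₂ in Set.Ioc 0 t, ∫ τ in (0:ℝ)..(min r₁ r₂), ∫ u : ℝ,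
        hk (r₁ - τ) u u₁ * hk (r₂ - τ) u u₂ * g (τ, u))) := by
  apply MeasureTheory.tendsto_integral_filter_of_dominated_convergence
    (fun _ => M * ((4 * Real.pi) ^ (-(1:ℝ)/2) * (2 * Real.sqrt r₁)))
  · filter_upwards [self_mem_nhdsWithin] with ε (hε : 0 < ε)
    apply (phi1_meas ε u₁ u₂ r₁ hgm).aestronglyMeasurable.congr
    filter_upwards [MeasureTheory.ae_restrict_mem measurableSet_Ioc] with r₂ hr₂
    rw [intervalIntegral.integral_of_le (lt_min hr₁ hr₂.1).le]
  · filter_upwards [Ioc_mem_nhdsGT_of_mem (by norm_num : (0:ℝ) ∈ Set.Ico 0 1)] with ε hε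
    obtain ⟨hε, hε1⟩ := hε
    filter_upwards [MeasureTheory.ae_restrict_mem measurableSet_Ioc] with r₂ hr₂
    rw [Real.norm_eq_abs, intervalIntegral.integral_of_le (lt_min hr₁ hr₂.1).le]
    exact tau_integral_bound hr₁ hr₂.1 hε hε1 hgb u₁ u₂
  · exact MeasureTheory.integrableOn_const measure_Ioc_lt_top.ne
  · filter_upwards [MeasureTheory.ae_restrict_mem measurableSet_Ioc] with r₂ hr₂
    have h := levelTau hr₁ hr₂.1 u₁ u₂ hgm M hgb
    rw [intervalIntegral.integral_of_le (lt_min hr₁ hr₂.1).le]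
    apply h.congr
    intro ε
    rw [intervalIntegral.integral_of_le (lt_min hr₁ hr₂.1).le]

lemma phi2_meas (ε u₁ u₂ : ℝ) {g : ℝ × ℝ → ℝ} (hgm : Measurable g) :
    Measurable (fun p : ℝ × ℝ => ∫ τ in Set.Ioc 0 (min p.1 p.2), ∫ u : ℝ,
      heatSg (p.1 - τ) (iot ε u₁) u * heatSg (p.2 - τ) (iot ε u₂) u * g (τ, u)) := by
  have hS : MeasurableSet {q : (ℝ × ℝ) × ℝ | q.2 ∈ Set.Ioc 0 (min q.1.1 q.1.2)} := by
    have he : {q : (ℝ × ℝ) × ℝ | q.2 ∈ Set.Ioc 0 (min q.1.1 q.1.2)}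
        = {q : (ℝ × ℝ) × ℝ | 0 < q.2} ∩ {q : (ℝ × ℝ) × ℝ | q.2 ≤ min q.1.1 q.1.2} := by
      ext q; simp [Set.mem_Ioc]
    rw [he]
    exact (measurableSet_lt measurable_const measurable_snd).inter
      (measurableSet_le measurable_snd
        ((measurable_fst.comp measurable_fst).min (measurable_snd.comp measurable_fst)))
  have hF := inner_meas3 ε u₁ u₂ hgm
  have key : (fun p : ℝ × ℝ => ∫ τ in Set.Ioc 0 (min p.1 p.2), ∫ u : ℝ,
      heatSg (p.1 - τ) (iot ε u₁) u * heatSg (p.2 - τ) (iot ε u₂) u * g (τ, u))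
      = fun p : ℝ × ℝ => ∫ τ : ℝ,
          ({q : (ℝ × ℝ) × ℝ | q.2 ∈ Set.Ioc 0 (min q.1.1 q.1.2)}).indicator
          (fun q : (ℝ × ℝ) × ℝ => ∫ u : ℝ,
            heatSg (q.1.1 - q.2) (iot ε u₁) u * heatSg (q.1.2 - q.2) (iot ε u₂) u * g (q.2, u))
          (p, τ) := by
    funext p
    rw [← MeasureTheory.integral_indicator measurableSet_Ioc]
    congr 1 with τ
  rw [key]
  exact ((hF.indicator hS).stronglyMeasurable.integral_prod_right').measurable

/-- Limit of the dynamical part of the covariance of two occupation times: as `ε → 0⁺`,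
the fourfold integral of `(T_{r₁-τ} ι^ε_{u₁})(u) (T_{r₂-τ} ι^ε_{u₂})(u) g(τ,u)` converges to
the corresponding integral with heat kernels. -/
theorem stmt17 (s t : ℝ) (hs : 0 < s) (ht : 0 < t) (u₁ u₂ : ℝ)
    (g : ℝ × ℝ → ℝ) (hgm : Measurable g) (M : ℝ) (hgb : ∀ z, |g z| ≤ M) :
    Filter.Tendsto (fun ε : ℝ =>
        ∫ r₁ in (0:ℝ)..s, ∫ r₂ in (0:ℝ)..t, ∫ τ in (0:ℝ)..(min r₁ r₂), ∫ u : ℝ,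
          heatSg (r₁ - τ) (iot ε u₁) u * heatSg (r₂ - τ) (iot ε u₂) u * g (τ, u))
      (nhdsWithin 0 (Set.Ioi 0))
      (nhds (∫ r₁ in (0:ℝ)..s, ∫ r₂ in (0:ℝ)..t, ∫ τ in (0:ℝ)..(min r₁ r₂), ∫ u : ℝ,
          hk (r₁ - τ) u u₁ * hk (r₂ - τ) u u₂ * g (τ, u))) := by
  simp only [intervalIntegral.integral_of_le hs.le, intervalIntegral.integral_of_le ht.le]
  apply MeasureTheory.tendsto_integral_filter_of_dominated_convergence
    (fun _ => t * (M * ((4 * Real.pi) ^ (-(1:ℝ)/2) * (2 * Real.sqrt s))))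
  · filter_upwards [self_mem_nhdsWithin] with ε (hε : 0 < ε)
    have hmeas : Measurable (fun r₁ : ℝ => ∫ r₂ in Set.Ioc 0 t,
        ∫ τ in Set.Ioc 0 (min r₁ r₂), ∫ u : ℝ,
          heatSg (r₁ - τ) (iot ε u₁) u * heatSg (r₂ - τ) (iot ε u₂) u * g (τ, u)) :=
      ((phi2_meas ε u₁ u₂ hgm).stronglyMeasurable.integral_prod_right').measurable
    apply hmeas.aestronglyMeasurable.congr
    filter_upwards [MeasureTheory.ae_restrict_mem measurableSet_Ioc] with r₁ hr₁
    apply MeasureTheory.integral_congr_ae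
    filter_upwards [MeasureTheory.ae_restrict_mem measurableSet_Ioc] with r₂ hr₂
    rw [intervalIntegral.integral_of_le (lt_min hr₁.1 hr₂.1).le]
  · filter_upwards [Ioc_mem_nhdsGT_of_mem (by norm_num : (0:ℝ) ∈ Set.Ico 0 1)] with ε hε
    obtain ⟨hε, hε1⟩ := hε
    filter_upwards [MeasureTheory.ae_restrict_mem measurableSet_Ioc] with r₁ hr₁
    have key : ‖∫ r₂ in Set.Ioc 0 t, ∫ τ in (0:ℝ)..(min r₁ r₂), ∫ u : ℝ,
        heatSg (r₁ - τ) (iot ε u₁) u * heatSg (r₂ - τ) (iot ε u₂) u * g (τ, u)‖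
        ≤ ∫ _ in Set.Ioc 0 t, M * ((4 * Real.pi) ^ (-(1:ℝ)/2) * (2 * Real.sqrt s)) := by
      apply MeasureTheory.norm_integral_le_of_norm_le
      · exact MeasureTheory.integrableOn_const measure_Ioc_lt_top.ne
      · filter_upwards [MeasureTheory.ae_restrict_mem measurableSet_Ioc] with r₂ hr₂
        rw [Real.norm_eq_abs, intervalIntegral.integral_of_le (lt_min hr₁.1 hr₂.1).le]
        apply (tau_integral_bound hr₁.1 hr₂.1 hε hε1 hgb u₁ u₂).trans
        apply mul_le_mul_of_nonneg_left _ (M_nonneg hgb)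
        apply mul_le_mul_of_nonneg_left _ (by positivity)
        have := Real.sqrt_le_sqrt hr₁.2
        linarith
    apply key.trans
    rw [MeasureTheory.setIntegral_const]
    rw [Real.volume_real_Ioc_of_le ht.le, sub_zero]
    simp [smul_eq_mul]
  · exact MeasureTheory.integrableOn_const measure_Ioc_lt_top.ne
  · filter_upwards [MeasureTheory.ae_restrict_mem measurableSet_Ioc] with r₁ hr₁
    exact levelR2 hr₁.1 ht u₁ u₂ hgm M hgb
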